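/- arXiv:2510.24191 — 4 statements merged into one kernel-verified Lean document; each statement's English description precedes it below -/
import Mathlib

section
/- Consider the nonlinear system x_{t+1} = f(x_t, u_t, w_t), y_t = h(x_t, u_t, w_t) and a sampling collection K generated by a bounded sequence D with bound d_max. Assume the system is sample-based exponentially i-IOSS with respect to K with parameters P1, P2 (symmetric positive definite), Q, R (positive semidefinite) and η ∈ [0,1). Let the measurement times K_s be an element of K, let the true trajectory satisfy the constraints (x_t ∈ X, w_t ∈ W, y_t ∈ Y for all t), and let the horizon M ∈ ℕ with M ≥ d_max be chosen such that ρ^M := 4 λ_max(P2,P1)² η^M < 1, defining ρ ∈ [0,1). Suppose the estimates x̂_t are generated by the sample-based MHE scheme, i.e., for every t ≥ 0 the pair (x̂*_{t−M_t|t}, ŵ*_{·|t}) is a minimizer of the MHE problem at time t and x̂_t := x̂*_{t|t}. Then the estimation error ê_t := x_t − x̂_t satisfies, for all t ≥ 0: ‖ê_t‖ ≤ 2 √(λ_max(P2,P1) λ_max(P2) / λ_min(P1)) (√ρ)^t ‖ê_0‖ + 2 √(λ_max(P2,P1) λ_max(Q) / λ_min(P1)) Σ_{j=0}^{t−1} (√ρ)^{t−j−1}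 ‖w_j‖; in particular, the sample-based MHE is robustly globally exponentially stable. -/
open scoped Classical

noncomputable section

/-- Squared weighted norm `‖v‖²_P = vᵀ P v`. -/
def normSq {k : ℕ} (P : Matrix (Fin k) (Fin k) ℝ) (v : Fin k → ℝ) : ℝ :=
  dotProduct v (P.mulVec v)

/-- Euclidean norm of a vector in `ℝ^k`. -/
def euclNorm {k : ℕ} (v : Fin k → ℝ) : ℝ := Real.sqrt (∑ i, v i ^ 2)

/-- Sampling set `K_i` generated by the sequence `d` (here `i` is zero-based, so
`sampleSet d 0` is `K_1`): its elements are `t_j^i = d_i + d_{i+1} + ⋯ + d_{i+j-1}`. -/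
def sampleSet (d : ℕ → ℕ) (i : ℕ) : Set ℕ :=
  {t | ∃ j : ℕ, t = ∑ l ∈ Finset.range (j + 1), d (i + l)}

/-- Time of the most recent available measurement strictly before time `t`
(`max {0, j ∈ Ks : j < t}`). -/
def lastMeas (Ks : Set ℕ) (t : ℕ) : ℕ := sSup (insert 0 {j | j ∈ Ks ∧ j < t})

/-- `δ_t = t − 1 − max{0, j ∈ Ks : j < t}`: time elapsed since the last measurement. -/
def delta (Ks : Set ℕ) (t : ℕ) : ℕ := t - 1 - lastMeas Ks t

/-- Time-varying horizon length `M_t = min {t, M + δ_t}`. -/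
def horizon (Ks : Set ℕ) (M t : ℕ) : ℕ := min t (M + delta Ks t)

/-- State at time `t0 + k` of the trajectory started at state `z` at time `t0` and driven by
the input `u` and disturbance `ω` through the dynamics `f`. -/
def rollout {n m q : ℕ} (f : (Fin n → ℝ) → (Fin m → ℝ) → (Fin q → ℝ) → (Fin n → ℝ))
    (u : ℕ → Fin m → ℝ) (ω : ℕ → Fin q → ℝ) (t0 : ℕ) (z : Fin n → ℝ) : ℕ → Fin n → ℝ
  | 0 => z
  | k + 1 => f (rollout f u ω t0 z k) (u (t0 + k)) (ω (t0 + k))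

/-- Feasibility of the decision variables `(z, ω)` (initial state `x̂_{t−L|t}` and
disturbance sequence) for the MHE problem at time `t` with window length `L`:
the induced state/disturbance/output sequence lies in `X`/`W`/`Y`. -/
def Feasible {n m q p : ℕ} (f : (Fin n → ℝ) → (Fin m → ℝ) → (Fin q → ℝ) → (Fin n → ℝ))
    (hout : (Fin n → ℝ) → (Fin m → ℝ) → (Fin q → ℝ) → (Fin p → ℝ))
    (X : Set (Fin n → ℝ)) (W : Set (Fin q → ℝ)) (Y : Set (Fin p → ℝ))
    (u : ℕ → Fin m → ℝ) (t L : ℕ) (z : Fin n → ℝ) (ω : ℕ → Fin q → ℝ) : Prop :=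
  (∀ k ≤ L, rollout f u ω (t - L) z k ∈ X) ∧
  (∀ k < L, ω (t - L + k) ∈ W) ∧
  (∀ k < L, hout (rollout f u ω (t - L) z k) (u (t - L + k)) (ω (t - L + k)) ∈ Y)

/-- MHE cost at time `t` with window length `L`, prior estimate `prior = x̂_{t−L}` and
measured outputs `y` (only measurements at times in `Ks` enter the output term). -/
def mheCost {n m q p : ℕ} (f : (Fin n → ℝ) → (Fin m → ℝ) → (Fin q → ℝ) → (Fin n → ℝ))
    (hout : (Fin n → ℝ) → (Fin m → ℝ) → (Fin q → ℝ) → (Fin p → ℝ))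
    (P2 : Matrix (Fin n) (Fin n) ℝ) (Q : Matrix (Fin q) (Fin q) ℝ)
    (R : Matrix (Fin p) (Fin p) ℝ) (η : ℝ) (Ks : Set ℕ)
    (u : ℕ → Fin m → ℝ) (y : ℕ → Fin p → ℝ) (prior : Fin n → ℝ)
    (t L : ℕ) (z : Fin n → ℝ) (ω : ℕ → Fin q → ℝ) : ℝ :=
  2 * η ^ L * normSq P2 (z - prior)
    + ∑ k ∈ Finset.range L, 2 * η ^ (L - k - 1) * normSq Q (ω (t - L + k))
    + ∑ k ∈ Finset.range L, Set.indicator Ks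
        (fun _ => η ^ (L - k - 1) * normSq R
          (hout (rollout f u ω (t - L) z k) (u (t - L + k)) (ω (t - L + k)) - y (t - L + k)))
        (t - L + k)

/-!
The MHE cost of the minimizer is at most the cost of the true trajectory, which bounds the fitting
error of the estimated trajectory on the horizon `[t - M_t, t)` by four times the prior error and the
true disturbances. The i-IOSS estimate turns this fitting error into a bound on `‖x_t - x̂_t‖²_{P1}`,
provided the sampling set it is applied with only sees measurement times. Either the horizon starts
at `0` and `K_s` itself is used, or it contains the last measurement before `t`; it is then split at
the first measurement time `μ` in it: on `[t - M_t, μ)` some `K_i` has no element, on `[μ, t)` the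
shifted set `μ + K_{i+1}` lies in `K_s`, and restarting the estimate at `μ` costs one factor
`λ_max(P2, P1)`. The resulting recursion
`‖ê_t‖²_{P1} ≤ 4 λ (η ^ M_t ‖ê_{t - M_t}‖²_{P2} + disturbances)` contracts because
`4 λ² η ^ M_t ≤ ρ ^ M_t` once `M_t ≥ M`; comparing the weighted norms with Euclidean ones and taking
square roots gives the claimed bound.
-/

open Matrix Finset
open scoped MatrixOrder

namespace Matrix.IsHermitian

variable {ι : Type*} [Fintype ι] [DecidableEq ι] {A B : Matrix ι ι ℝ} {lam : ℝ}

lemma det_sub_smul_one_eq_zero_of_mem_spectrum (hl : lam ∈ spectrum ℝ A) :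
    (A - lam • (1 : Matrix ι ι ℝ)).det = 0 := by
  rw [spectrum.mem_iff, isUnit_iff_isUnit_det, isUnit_iff_ne_zero, not_not,
    Algebra.algebraMap_eq_smul_one, ← neg_sub, det_neg] at hl
  simpa using hl

lemma le_smul_one_of_mem_upperBounds (hA : A.IsHermitian)
    (h : lam ∈ upperBounds {l : ℝ | (A - l • (1 : Matrix ι ι ℝ)).det = 0}) :
    A ≤ lam • (1 : Matrix ι ι ℝ) := by
  rw [← Algebra.algebraMap_eq_smul_one]
  exact le_algebraMap_of_spectrum_le
    (fun l hl => h (det_sub_smul_one_eq_zero_of_mem_spectrum hl)) hA.isSelfAdjoint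

lemma smul_one_le_of_mem_lowerBounds (hA : A.IsHermitian)
    (h : lam ∈ lowerBounds {l : ℝ | (A - l • (1 : Matrix ι ι ℝ)).det = 0}) :
    lam • (1 : Matrix ι ι ℝ) ≤ A := by
  rw [← Algebra.algebraMap_eq_smul_one]
  exact algebraMap_le_of_le_spectrum
    (fun l hl => h (det_sub_smul_one_eq_zero_of_mem_spectrum hl)) hA.isSelfAdjoint

/-- Reduction to the standard eigenvalue problem through `B^{-1/2} A B^{-1/2}`. -/
lemma le_smul_of_mem_upperBounds (hA : A.IsHermitian) (hB : B.PosDef)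
    (h : lam ∈ upperBounds {l : ℝ | (A - l • B).det = 0}) : A ≤ lam • B := by
  set S := CFC.sqrt B
  have hSS : S * S = B := CFC.sqrt_mul_sqrt_self B hB.posSemidef.nonneg
  have hS : Sᴴ = S := (CFC.sqrt_nonneg B).posSemidef.isHermitian
  have hSdet : IsUnit S.det := by
    refine isUnit_iff_ne_zero.2 fun h0 => hB.det_pos.ne' ?_
    rw [← hSS, det_mul, h0, zero_mul]
  set T := S⁻¹
  have hT : Tᴴ = T := by rw [conjTranspose_nonsing_inv, hS]
  have hTS : T * S = 1 := nonsing_inv_mul S hSdet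
  have hST : S * T = 1 := mul_nonsing_inv S hSdet
  have hTdet : T.det ≠ 0 := left_ne_zero_of_mul_eq_one (by rw [← det_mul, hTS, det_one])
  have hconj : ∀ l : ℝ, T * (A - l • B) * T = T * A * T - l • 1 := by
    intro l
    rw [mul_sub, sub_mul, Matrix.mul_smul, Matrix.smul_mul, ← hSS, ← mul_assoc, hTS, one_mul,
      hST]
  have hA' : (T * A * T).IsHermitian := by
    have := isHermitian_conjTranspose_mul_mul T hA
    rwa [hT] at this
  have hle := hA'.le_smul_one_of_mem_upperBounds fun l (hl : (T * A * T - l • 1).det = 0) => h <| by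
    rw [← hconj, det_mul, det_mul] at hl
    simpa [hTdet] using hl
  have hpsd := (Matrix.le_iff.1 hle).conjTranspose_mul_mul_same S
  rw [hS, mul_sub, sub_mul, Matrix.mul_smul, Matrix.smul_mul, mul_one, hSS, ← mul_assoc,
    ← mul_assoc, hST, one_mul, mul_assoc, hTS, mul_one] at hpsd
  exact Matrix.le_iff.2 hpsd

end Matrix.IsHermitian

section QuadraticForm

variable {k : ℕ}

lemma normSq_nonneg {P : Matrix (Fin k) (Fin k) ℝ} (hP : P.PosSemidef) (v : Fin k → ℝ) :
    0 ≤ normSq P v := by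
  simpa [normSq] using hP.dotProduct_mulVec_nonneg v

lemma normSq_pos {P : Matrix (Fin k) (Fin k) ℝ} (hP : P.PosDef) {v : Fin k → ℝ} (hv : v ≠ 0) :
    0 < normSq P v := by
  simpa [normSq] using hP.dotProduct_mulVec_pos hv

lemma normSq_zero (P : Matrix (Fin k) (Fin k) ℝ) : normSq P 0 = 0 := by
  simp [normSq]

lemma normSq_sub_comm (P : Matrix (Fin k) (Fin k) ℝ) (a b : Fin k → ℝ) :
    normSq P (a - b) = normSq P (b - a) := by
  simp only [normSq, mulVec_sub, dotProduct_sub, sub_dotProduct]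
  ring

lemma normSq_sub_le {P : Matrix (Fin k) (Fin k) ℝ} (hP : P.PosSemidef) (a b : Fin k → ℝ) :
    normSq P (a - b) ≤ 2 * normSq P a + 2 * normSq P b := by
  have h := normSq_nonneg hP (a + b)
  simp only [normSq, mulVec_add, mulVec_sub, add_dotProduct, sub_dotProduct, dotProduct_add,
    dotProduct_sub] at h ⊢
  linarith

lemma normSq_smul (c : ℝ) (P : Matrix (Fin k) (Fin k) ℝ) (v : Fin k → ℝ) :
    normSq (c • P) v = c * normSq P v := by
  simp [normSq, smul_mulVec, dotProduct_smul]

lemma normSq_one (v : Fin k → ℝ) : normSq 1 v = euclNorm v ^ 2 := by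
  rw [euclNorm, Real.sq_sqrt (Finset.sum_nonneg fun i _ => sq_nonneg (v i))]
  simp [normSq, dotProduct, sq]

lemma euclNorm_nonneg {k : ℕ} (v : Fin k → ℝ) : 0 ≤ euclNorm v := Real.sqrt_nonneg _

lemma normSq_le_normSq_of_le {A B : Matrix (Fin k) (Fin k) ℝ} (h : A ≤ B) (v : Fin k → ℝ) :
    normSq A v ≤ normSq B v := by
  have h' := normSq_nonneg (Matrix.le_iff.1 h) v
  simp only [normSq, sub_mulVec, dotProduct_sub] at h'
  exact sub_nonneg.1 h'

lemma exists_ne_zero_normSq_eq_of_det_sub_smul_eq_zero {A B : Matrix (Fin k) (Fin k) ℝ} {l : ℝ}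
    (h : (A - l • B).det = 0) : ∃ v ≠ 0, normSq A v = l * normSq B v := by
  obtain ⟨v, hv, hAv⟩ := Matrix.exists_mulVec_eq_zero_iff.2 h
  refine ⟨v, hv, ?_⟩
  rw [sub_mulVec, smul_mulVec, sub_eq_zero] at hAv
  simp [normSq, hAv, dotProduct_smul]

lemma one_le_of_det_sub_smul_eq_zero {A B : Matrix (Fin k) (Fin k) ℝ} (hB : B.PosDef)
    (hBA : ∀ v, normSq B v ≤ normSq A v) {l : ℝ} (h : (A - l • B).det = 0) : 1 ≤ l := by
  obtain ⟨v, hv, hAv⟩ := exists_ne_zero_normSq_eq_of_det_sub_smul_eq_zero h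
  have := normSq_pos hB hv
  nlinarith [hBA v]

lemma nonneg_of_det_sub_smul_one_eq_zero {A : Matrix (Fin k) (Fin k) ℝ} (hA : A.PosSemidef)
    {l : ℝ} (h : (A - l • (1 : Matrix (Fin k) (Fin k) ℝ)).det = 0) : 0 ≤ l := by
  obtain ⟨v, hv, hAv⟩ := exists_ne_zero_normSq_eq_of_det_sub_smul_eq_zero h
  have := normSq_pos PosDef.one hv
  nlinarith [normSq_nonneg hA v]

lemma pos_of_det_sub_smul_one_eq_zero {A : Matrix (Fin k) (Fin k) ℝ} (hA : A.PosDef)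
    {l : ℝ} (h : (A - l • (1 : Matrix (Fin k) (Fin k) ℝ)).det = 0) : 0 < l := by
  obtain ⟨v, hv, hAv⟩ := exists_ne_zero_normSq_eq_of_det_sub_smul_eq_zero h
  have := normSq_pos PosDef.one hv
  nlinarith [normSq_pos hA hv]

end QuadraticForm

section Bounds

variable {k : ℕ} {A B : Matrix (Fin k) (Fin k) ℝ} {lam : ℝ}

lemma normSq_le_mul_euclNorm_sq (hA : A.IsHermitian)
    (h : lam ∈ upperBounds {l : ℝ | (A - l • (1 : Matrix (Fin k) (Fin k) ℝ)).det = 0})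
    (v : Fin k → ℝ) : normSq A v ≤ lam * euclNorm v ^ 2 := by
  simpa [normSq_smul, normSq_one] using
    normSq_le_normSq_of_le (hA.le_smul_one_of_mem_upperBounds h) v

lemma mul_euclNorm_sq_le_normSq (hA : A.IsHermitian)
    (h : lam ∈ lowerBounds {l : ℝ | (A - l • (1 : Matrix (Fin k) (Fin k) ℝ)).det = 0})
    (v : Fin k → ℝ) : lam * euclNorm v ^ 2 ≤ normSq A v := by
  simpa [normSq_smul, normSq_one] using
    normSq_le_normSq_of_le (hA.smul_one_le_of_mem_lowerBounds h) v

lemma normSq_le_mul_normSq (hA : A.IsHermitian) (hB : B.PosDef)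
    (h : lam ∈ upperBounds {l : ℝ | (A - l • B).det = 0}) (v : Fin k → ℝ) :
    normSq A v ≤ lam * normSq B v := by
  simpa [normSq_smul] using normSq_le_normSq_of_le (hA.le_smul_of_mem_upperBounds hB h) v

end Bounds

section RealInequalities

lemma sum_range_add_pow_mul (η : ℝ) (a : ℕ → ℝ) (T₁ T₂ : ℕ) :
    ∑ j ∈ range (T₁ + T₂), η ^ (T₁ + T₂ - j - 1) * a j =
      η ^ T₂ * ∑ j ∈ range T₁, η ^ (T₁ - j - 1) * a j
        + ∑ j ∈ range T₂, η ^ (T₂ - j - 1) * a (T₁ + j) := by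
  rw [sum_range_add, mul_sum]
  congr 1
  · refine sum_congr rfl fun j hj => ?_
    rw [← mul_assoc, ← pow_add, show T₂ + (T₁ - j - 1) = T₁ + T₂ - j - 1 by
      have := mem_range.1 hj; omega]
  · exact sum_congr rfl fun j _ => by rw [show T₁ + T₂ - (T₁ + j) - 1 = T₂ - j - 1 by omega]

lemma mul_pow_le_pow_of_pow_eq {C η ρ : ℝ} {M L : ℕ} (hη : 0 ≤ η) (hηρ : η ≤ ρ)
    (hρM : ρ ^ M = C * η ^ M) (hML : M ≤ L) : C * η ^ L ≤ ρ ^ L := by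
  obtain ⟨L, rfl⟩ := Nat.exists_eq_add_of_le hML
  rw [pow_add, pow_add, ← mul_assoc, ← hρM]
  exact mul_le_mul_of_nonneg_left (pow_le_pow_left₀ hη hηρ L) (pow_nonneg (hη.trans hηρ) M)

lemma le_add_sum_of_sq_le {x a : ℝ} {b : ℕ → ℝ} {s : Finset ℕ} (ha : 0 ≤ a)
    (hb : ∀ j ∈ s, 0 ≤ b j) (h : x ^ 2 ≤ a ^ 2 + ∑ j ∈ s, b j ^ 2) : x ≤ a + ∑ j ∈ s, b j := by
  have hs := sum_nonneg hb
  refine le_of_pow_le_pow_left₀ two_ne_zero (add_nonneg ha hs) (h.trans ?_)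
  nlinarith [sum_sq_le_sq_sum_of_nonneg hb]

lemma two_mul_sqrt_mul_sqrt_pow_mul_sq {C ρ : ℝ} (hC : 0 ≤ C) (hρ : 0 ≤ ρ) (t : ℕ) (E : ℝ) :
    (2 * √C * √ρ ^ t * E) ^ 2 = 4 * C * ρ ^ t * E ^ 2 := by
  rw [mul_pow, mul_pow, mul_pow, Real.sq_sqrt hC, ← pow_mul, mul_comm t, pow_mul,
    Real.sq_sqrt hρ]
  ring

end RealInequalities

section Sampling

def sampleTime (d : ℕ → ℕ) (i c : ℕ) : ℕ := ∑ l ∈ range (c + 1), d (i + l)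

variable {d : ℕ → ℕ} {i : ℕ}

lemma sampleTime_mono : Monotone (sampleTime d i) := fun _ _ h =>
  sum_le_sum_of_subset (range_subset_range.2 (by omega))

lemma sampleTime_succ (c : ℕ) :
    sampleTime d i (c + 1) = sampleTime d i c + d (i + (c + 1)) :=
  sum_range_succ _ _

lemma le_of_mem_sampleSet {j : ℕ} (h : j ∈ sampleSet d i) : d i ≤ j := by
  obtain ⟨c, rfl⟩ := h
  simpa using single_le_sum (f := fun l => d (i + l)) (fun _ _ => Nat.zero_le _)
    (mem_range.2 (Nat.succ_pos c))

lemma sampleTime_add_mem_sampleSet {c j : ℕ} (h : j ∈ sampleSet d (i + c + 1)) :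
    sampleTime d i c + j ∈ sampleSet d i := by
  obtain ⟨c', rfl⟩ := h
  refine ⟨c + 1 + c', ?_⟩
  rw [show c + 1 + c' + 1 = (c + 1) + (c' + 1) by omega, sum_range_add (fun l => d (i + l))]
  simp only [sampleTime, add_assoc]

/-- Take the first sample time not before `τ`: the previous one lies before `τ`. -/
lemma exists_sampleTime_near {τ s : ℕ} (hs : s ∈ sampleSet d i) (hτs : τ ≤ s) :
    ∃ c, τ ≤ sampleTime d i c ∧ sampleTime d i c ≤ s ∧ sampleTime d i c - τ ≤ d (i + c) := by
  obtain ⟨cs, rfl⟩ := hs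
  have hex : ∃ c, τ ≤ sampleTime d i c := ⟨cs, hτs⟩
  refine ⟨Nat.find hex, Nat.find_spec hex, sampleTime_mono (Nat.find_le hτs), ?_⟩
  rcases h : Nat.find hex with _ | c
  · simp [sampleTime]
  · have hprev := Nat.find_min hex (show c < Nat.find hex by omega)
    rw [sampleTime_succ]
    omega

end Sampling

section LastMeasurement

variable {Ks : Set ℕ} {t : ℕ}

lemma lastMeas_bddAbove (Ks : Set ℕ) (t : ℕ) : BddAbove (insert 0 {j | j ∈ Ks ∧ j < t}) :=
  ⟨t, by rintro j (rfl | ⟨_, hj⟩) <;> omega⟩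

lemma lastMeas_lt (ht : 0 < t) : lastMeas Ks t < t :=
  Nat.lt_of_le_sub_one ht <| csSup_le ⟨0, Set.mem_insert _ _⟩ <| by
    rintro j (rfl | ⟨_, hj⟩) <;> omega

lemma lastMeas_mem (h : lastMeas Ks t ≠ 0) : lastMeas Ks t ∈ Ks := by
  rcases Nat.sSup_mem ⟨0, Set.mem_insert _ _⟩ (lastMeas_bddAbove Ks t) with h0 | hmem
  · exact absurd h0 h
  · exact hmem.1

lemma horizon_eq_or_exists_mem {M : ℕ} (hM : 0 < M) :
    horizon Ks M t = t ∨
      M ≤ horizon Ks M t ∧ ∃ s ∈ Ks, t - horizon Ks M t ≤ s ∧ s < t := by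
  unfold horizon delta
  by_cases hlt : M + (t - 1 - lastMeas Ks t) < t
  · have hℓ := lastMeas_lt (Ks := Ks) (show 0 < t by omega)
    refine Or.inr ⟨by omega, lastMeas Ks t, lastMeas_mem (by omega), by omega, hℓ⟩
  · exact Or.inl (by omega)

lemma horizon_pos {M : ℕ} (hM : 0 < M) (ht : 0 < t) : 0 < horizon Ks M t :=
  lt_min ht (Nat.add_pos_left hM _)

end LastMeasurement

section IOSS

variable {n m q p : ℕ} {f : (Fin n → ℝ) → (Fin m → ℝ) → (Fin q → ℝ) → (Fin n → ℝ)}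
  {hout : (Fin n → ℝ) → (Fin m → ℝ) → (Fin q → ℝ) → (Fin p → ℝ)} {W : Set (Fin q → ℝ)}
  {d : ℕ → ℕ} {P1 P2 : Matrix (Fin n) (Fin n) ℝ} {Q : Matrix (Fin q) (Fin q) ℝ}
  {R : Matrix (Fin p) (Fin p) ℝ} {η : ℝ} {S : Set ℕ}
  {xa xb : ℕ → Fin n → ℝ} {ua : ℕ → Fin m → ℝ} {wa wb v : ℕ → Fin q → ℝ}

variable (hout P2 Q R η) in
/-- Right-hand side of the sample-based i-IOSS estimate at time `t`, output errors being
counted at the times in `S`. -/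
def iossBound (S : Set ℕ) (xa xb : ℕ → Fin n → ℝ) (ua : ℕ → Fin m → ℝ)
    (wa wb : ℕ → Fin q → ℝ) (t : ℕ) : ℝ :=
  η ^ t * normSq P2 (xa 0 - xb 0)
    + ∑ j ∈ range t, η ^ (t - j - 1) * normSq Q (wa j - wb j)
    + ∑ j ∈ range t, S.indicator
        (fun j => η ^ (t - j - 1) *
          normSq R (hout (xa j) (ua j) (wa j) - hout (xb j) (ua j) (wb j))) j

variable (f hout W d P1 P2 Q R η) in
def SampleIOSS : Prop :=
  ∀ (xa xb : ℕ → Fin n → ℝ) (ua : ℕ → Fin m → ℝ) (wa wb : ℕ → Fin q → ℝ),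
    (∀ t, wa t ∈ W) → (∀ t, wb t ∈ W) →
    (∀ t, xa (t + 1) = f (xa t) (ua t) (wa t)) →
    (∀ t, xb (t + 1) = f (xb t) (ua t) (wb t)) →
    ∀ t i, normSq P1 (xa t - xb t) ≤ iossBound hout P2 Q R η (sampleSet d i) xa xb ua wa wb t

lemma iossBound_eq (t : ℕ) :
    iossBound hout P2 Q R η S xa xb ua wa wb t =
      η ^ t * normSq P2 (xa 0 - xb 0)
        + ∑ j ∈ range t, η ^ (t - j - 1) * (normSq Q (wa j - wb j) + S.indicator
            (fun j => normSq R (hout (xa j) (ua j) (wa j) - hout (xb j) (ua j) (wb j))) j) := by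
  simp only [iossBound, mul_add, sum_add_distrib, Set.indicator_mul_right, add_assoc]

lemma iossBound_congr {xa' xb' : ℕ → Fin n → ℝ} {wa' wb' : ℕ → Fin q → ℝ} {t : ℕ}
    (hxa : ∀ j ≤ t, xa' j = xa j) (hxb : ∀ j ≤ t, xb' j = xb j)
    (hwa : ∀ j < t, wa' j = wa j) (hwb : ∀ j < t, wb' j = wb j) :
    iossBound hout P2 Q R η S xa' xb' ua wa' wb' t =
      iossBound hout P2 Q R η S xa xb ua wa wb t := by
  rw [iossBound_eq, iossBound_eq, hxa 0 (Nat.zero_le t), hxb 0 (Nat.zero_le t)]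
  congr 1
  refine sum_congr rfl fun j hj => ?_
  have hj := mem_range.1 hj
  simp only [Set.indicator_apply, hxa j hj.le, hxb j hj.le, hwa j hj, hwb j hj]

lemma iossBound_mono {S' : Set ℕ} (hR : R.PosSemidef) (hη : 0 ≤ η) (t : ℕ)
    (hS : ∀ j < t, j ∈ S → j ∈ S') :
    iossBound hout P2 Q R η S xa xb ua wa wb t ≤ iossBound hout P2 Q R η S' xa xb ua wa wb t := by
  rw [iossBound_eq, iossBound_eq]
  gcongr _ + ∑ j ∈ _, _ * (_ + ?_) with j hj
  simp only [Set.indicator_apply]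
  split_ifs with h h'
  exacts [le_rfl, absurd (hS j (mem_range.1 hj) h) h', normSq_nonneg hR _, le_rfl]

lemma exists_extension_of_forall_lt {x : ℕ → Fin n → ℝ} {u : ℕ → Fin m → ℝ}
    {w : ℕ → Fin q → ℝ} {t : ℕ} (hv : ∀ j, v j ∈ W) (hw : ∀ j < t, w j ∈ W)
    (hx : ∀ j < t, x (j + 1) = f (x j) (u j) (w j)) :
    ∃ (x' : ℕ → Fin n → ℝ) (w' : ℕ → Fin q → ℝ), (∀ j, w' j ∈ W) ∧
      (∀ j, x' (j + 1) = f (x' j) (u j) (w' j)) ∧ (∀ j ≤ t, x' j = x j) ∧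
      (∀ j < t, w' j = w j) := by
  set w' := fun j => if j < t then w j else v j
  have hw' : ∀ j < t, w' j = w j := fun j hj => if_pos hj
  refine ⟨rollout f u w' 0 (x 0), w', fun j => ?_, fun j => by simp [rollout], ?_, hw'⟩
  · by_cases hj : j < t
    · simpa [w', hj] using hw j hj
    · simpa [w', hj] using hv j
  · intro j hj
    induction j with
    | zero => rfl
    | succ j ih => simp [rollout, ih (by omega), hw' j hj, hx j hj]

theorem SampleIOSS.normSq_sub_le (hI : SampleIOSS f hout W d P1 P2 Q R η) (hv : ∀ j, v j ∈ W)
    {t : ℕ} (hwa : ∀ j < t, wa j ∈ W) (hwb : ∀ j < t, wb j ∈ W)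
    (hxa : ∀ j < t, xa (j + 1) = f (xa j) (ua j) (wa j))
    (hxb : ∀ j < t, xb (j + 1) = f (xb j) (ua j) (wb j)) (i : ℕ) :
    normSq P1 (xa t - xb t) ≤ iossBound hout P2 Q R η (sampleSet d i) xa xb ua wa wb t := by
  obtain ⟨xa', wa', hwa', hxa', hxa_eq, hwa_eq⟩ := exists_extension_of_forall_lt hv hwa hxa
  obtain ⟨xb', wb', hwb', hxb', hxb_eq, hwb_eq⟩ := exists_extension_of_forall_lt hv hwb hxb
  have h := hI xa' xb' ua wa' wb' hwa' hwb' hxa' hxb' t i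
  rwa [hxa_eq t le_rfl, hxb_eq t le_rfl, iossBound_congr hxa_eq hxb_eq hwa_eq hwb_eq] at h

lemma SampleIOSS.normSq_le_normSq (hI : SampleIOSS f hout W d P1 P2 Q R η) (hv : ∀ j, v j ∈ W)
    (z : Fin n → ℝ) : normSq P1 z ≤ normSq P2 z := by
  have h := hI.normSq_sub_le (xa := fun _ => z) (xb := fun _ => 0) (ua := fun _ => 0) (wa := v)
    (wb := v) hv (t := 0) (by simp) (by simp) (by simp) (by simp) 0
  simpa [iossBound] using h

/-- The estimate is restarted at `T`, where converting the error from `P1` to `P2` costs `κ`. -/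
theorem SampleIOSS.normSq_sub_le_of_split (hI : SampleIOSS f hout W d P1 P2 Q R η)
    (hv : ∀ j, v j ∈ W) (hQ : Q.PosSemidef) (hR : R.PosSemidef) (hη : 0 ≤ η) {κ : ℝ}
    (hκ : 1 ≤ κ) (hP21 : ∀ z, normSq P2 z ≤ κ * normSq P1 z) {L T i₁ i₂ : ℕ} (hTL : T ≤ L)
    (h₁ : ∀ j ∈ sampleSet d i₁, T ≤ j) (h₂ : ∀ j ∈ sampleSet d i₂, T + j ∈ S)
    (hwa : ∀ j < L, wa j ∈ W) (hwb : ∀ j < L, wb j ∈ W)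
    (hxa : ∀ j < L, xa (j + 1) = f (xa j) (ua j) (wa j))
    (hxb : ∀ j < L, xb (j + 1) = f (xb j) (ua j) (wb j)) :
    normSq P1 (xa L - xb L) ≤ κ * iossBound hout P2 Q R η S xa xb ua wa wb L := by
  obtain ⟨T₂, rfl⟩ : ∃ T₂, L = T + T₂ := ⟨L - T, by omega⟩
  set g := fun j => normSq Q (wa j - wb j) + S.indicator
    (fun j => normSq R (hout (xa j) (ua j) (wa j) - hout (xb j) (ua j) (wb j))) j
  have hg : ∀ j, 0 ≤ g j := fun j =>
    add_nonneg (normSq_nonneg hQ _) (Set.indicator_nonneg (fun _ _ => normSq_nonneg hR _) _)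
  have hinner : normSq P1 (xa T - xb T) ≤
      η ^ T * normSq P2 (xa 0 - xb 0) + ∑ j ∈ range T, η ^ (T - j - 1) * g j :=
    calc normSq P1 (xa T - xb T)
        ≤ iossBound hout P2 Q R η (sampleSet d i₁) xa xb ua wa wb T :=
          hI.normSq_sub_le hv (fun j hj => hwa j (by omega)) (fun j hj => hwb j (by omega))
            (fun j hj => hxa j (by omega)) (fun j hj => hxb j (by omega)) i₁
      _ ≤ iossBound hout P2 Q R η S xa xb ua wa wb T :=
          iossBound_mono hR hη T fun j hj hjK => absurd (h₁ j hjK) (by omega)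
      _ = _ := iossBound_eq T
  have houter : normSq P1 (xa (T + T₂) - xb (T + T₂)) ≤
      η ^ T₂ * normSq P2 (xa T - xb T) + ∑ j ∈ range T₂, η ^ (T₂ - j - 1) * g (T + j) :=
    calc normSq P1 (xa (T + T₂) - xb (T + T₂))
        ≤ iossBound hout P2 Q R η (sampleSet d i₂) (fun j => xa (T + j)) (fun j => xb (T + j))
            (fun j => ua (T + j)) (fun j => wa (T + j)) (fun j => wb (T + j)) T₂ :=
          hI.normSq_sub_le (xa := fun j => xa (T + j)) (xb := fun j => xb (T + j)) hv
            (fun j hj => hwa (T + j) (by omega)) (fun j hj => hwb (T + j) (by omega))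
            (fun j hj => hxa (T + j) (by omega)) (fun j hj => hxb (T + j) (by omega)) i₂
      _ ≤ iossBound hout P2 Q R η {j | T + j ∈ S} (fun j => xa (T + j)) (fun j => xb (T + j))
            (fun j => ua (T + j)) (fun j => wa (T + j)) (fun j => wb (T + j)) T₂ :=
          iossBound_mono hR hη T₂ fun j _ hj => h₂ j hj
      _ = _ := by rw [iossBound_eq]; rfl
  have hsum₂ : 0 ≤ ∑ j ∈ range T₂, η ^ (T₂ - j - 1) * g (T + j) :=
    sum_nonneg fun j _ => mul_nonneg (pow_nonneg hη _) (hg _)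
  rw [iossBound_eq, sum_range_add_pow_mul, pow_add]
  calc normSq P1 (xa (T + T₂) - xb (T + T₂))
      ≤ η ^ T₂ * (κ * (η ^ T * normSq P2 (xa 0 - xb 0) + ∑ j ∈ range T, η ^ (T - j - 1) * g j))
        + ∑ j ∈ range T₂, η ^ (T₂ - j - 1) * g (T + j) := by
        grw [houter, hP21, hinner]
    _ ≤ _ := by linarith [le_mul_of_one_le_left hsum₂ hκ]

end IOSS

section MHE

variable {n m q p : ℕ} {f : (Fin n → ℝ) → (Fin m → ℝ) → (Fin q → ℝ) → (Fin n → ℝ)}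
  {hout : (Fin n → ℝ) → (Fin m → ℝ) → (Fin q → ℝ) → (Fin p → ℝ)}
  {X : Set (Fin n → ℝ)} {W : Set (Fin q → ℝ)} {Y : Set (Fin p → ℝ)} {d : ℕ → ℕ}
  {P1 P2 : Matrix (Fin n) (Fin n) ℝ} {Q : Matrix (Fin q) (Fin q) ℝ}
  {R : Matrix (Fin p) (Fin p) ℝ} {η : ℝ} {Ks : Set ℕ}
  {u : ℕ → Fin m → ℝ} {w : ℕ → Fin q → ℝ} {x : ℕ → Fin n → ℝ} {y : ℕ → Fin p → ℝ}

lemma rollout_eq_of_trajectory (hx : ∀ t, x (t + 1) = f (x t) (u t) (w t)) (t₀ k : ℕ) :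
    rollout f u w t₀ (x t₀) k = x (t₀ + k) := by
  induction k with
  | zero => rfl
  | succ k ih => rw [rollout, ih]; exact (hx _).symm

lemma feasible_of_trajectory (hx : ∀ t, x (t + 1) = f (x t) (u t) (w t))
    (hy : ∀ t, y t = hout (x t) (u t) (w t)) (hxX : ∀ t, x t ∈ X) (hwW : ∀ t, w t ∈ W)
    (hyY : ∀ t, y t ∈ Y) (t L : ℕ) : Feasible f hout X W Y u t L (x (t - L)) w :=
  ⟨fun k _ => rollout_eq_of_trajectory hx _ k ▸ hxX _, fun _ _ => hwW _,
    fun k _ => by rw [rollout_eq_of_trajectory hx, ← hy]; exact hyY _⟩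

lemma mheCost_of_trajectory (hx : ∀ t, x (t + 1) = f (x t) (u t) (w t))
    (hy : ∀ t, y t = hout (x t) (u t) (w t)) (prior : Fin n → ℝ) (t L : ℕ) :
    mheCost f hout P2 Q R η Ks u y prior t L (x (t - L)) w =
      2 * (η ^ L * normSq P2 (x (t - L) - prior)
        + ∑ k ∈ range L, η ^ (L - k - 1) * normSq Q (w (t - L + k))) := by
  simp only [mheCost, rollout_eq_of_trajectory hx, ← hy, sub_self, normSq_zero, mul_zero,
    Set.indicator_zero, sum_const_zero, add_zero]
  rw [mul_add, mul_sum]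
  simp only [mul_assoc]

/-- The first summand on the right is the MHE cost of the true trajectory
(`mheCost_of_trajectory`). -/
lemma iossBound_le_mheCost_add (hP2 : P2.PosSemidef) (hQ : Q.PosSemidef) (hη : 0 ≤ η)
    (hy : ∀ t, y t = hout (x t) (u t) (w t)) (prior z : Fin n → ℝ) (ω : ℕ → Fin q → ℝ)
    (t L : ℕ) :
    iossBound hout P2 Q R η {k | t - L + k ∈ Ks} (fun k => x (t - L + k))
        (rollout f u ω (t - L) z) (fun k => u (t - L + k)) (fun k => w (t - L + k))
        (fun k => ω (t - L + k)) L ≤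
      2 * (η ^ L * normSq P2 (x (t - L) - prior)
          + ∑ k ∈ range L, η ^ (L - k - 1) * normSq Q (w (t - L + k)))
        + mheCost f hout P2 Q R η Ks u y prior t L z ω := by
  have hprior : η ^ L * normSq P2 (x (t - L) - z) ≤
      2 * (η ^ L * normSq P2 (x (t - L) - prior)) + 2 * η ^ L * normSq P2 (z - prior) := by
    have h := normSq_sub_le hP2 (x (t - L) - prior) (z - prior)
    rw [sub_sub_sub_cancel_right] at h
    nlinarith [pow_nonneg hη L]
  have hdist : ∑ k ∈ range L, η ^ (L - k - 1) * normSq Q (w (t - L + k) - ω (t - L + k)) ≤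
      2 * ∑ k ∈ range L, η ^ (L - k - 1) * normSq Q (w (t - L + k))
        + ∑ k ∈ range L, 2 * η ^ (L - k - 1) * normSq Q (ω (t - L + k)) := by
    rw [mul_sum, ← sum_add_distrib]
    refine sum_le_sum fun k _ => ?_
    nlinarith [normSq_sub_le hQ (w (t - L + k)) (ω (t - L + k)), pow_nonneg hη (L - k - 1)]
  have houtput : ∑ k ∈ range L, {k | t - L + k ∈ Ks}.indicator (fun k => η ^ (L - k - 1) *
        normSq R (hout (x (t - L + k)) (u (t - L + k)) (w (t - L + k)) -
          hout (rollout f u ω (t - L) z k) (u (t - L + k)) (ω (t - L + k)))) k =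
      ∑ k ∈ range L, Ks.indicator (fun _ => η ^ (L - k - 1) *
        normSq R (hout (rollout f u ω (t - L) z k) (u (t - L + k)) (ω (t - L + k)) -
          y (t - L + k))) (t - L + k) :=
    sum_congr rfl fun k _ => by
      simp only [Set.indicator_apply, Set.mem_ofPred_eq, hy, normSq_sub_comm (P := R)]
  simp only [iossBound, mheCost, add_zero, rollout]
  rw [houtput]
  linarith

theorem SampleIOSS.normSq_sub_rollout_le (hI : SampleIOSS f hout W d P1 P2 Q R η) {i₀ : ℕ}
    (hKs : Ks = sampleSet d i₀) (hP1 : P1.PosSemidef) (hQ : Q.PosSemidef) (hR : R.PosSemidef)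
    (hη : 0 ≤ η) {κ : ℝ} (hκ : 1 ≤ κ) (hP21 : ∀ z, normSq P2 z ≤ κ * normSq P1 z) {M : ℕ}
    (hM : 0 < M) (hx : ∀ t, x (t + 1) = f (x t) (u t) (w t)) (hwW : ∀ t, w t ∈ W) {t : ℕ}
    {z : Fin n → ℝ} {ω : ℕ → Fin q → ℝ}
    (hω : ∀ j < horizon Ks M t, ω (t - horizon Ks M t + j) ∈ W) :
    normSq P1 (x t - rollout f u ω (t - horizon Ks M t) z (horizon Ks M t)) ≤
      κ * iossBound hout P2 Q R η {k | t - horizon Ks M t + k ∈ Ks}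
        (fun k => x (t - horizon Ks M t + k)) (rollout f u ω (t - horizon Ks M t) z)
        (fun k => u (t - horizon Ks M t + k)) (fun k => w (t - horizon Ks M t + k))
        (fun k => ω (t - horizon Ks M t + k)) (horizon Ks M t) := by
  set L := horizon Ks M t
  obtain ⟨τ, hτ⟩ : ∃ τ, t - L = τ := ⟨_, rfl⟩
  have hτL : τ + L = t := hτ ▸ Nat.sub_add_cancel (min_le_left _ _)
  rw [hτ] at hω ⊢
  nth_rw 1 [← hτL]
  have hxa : ∀ j < L, x (τ + (j + 1)) = f (x (τ + j)) (u (τ + j)) (w (τ + j)) :=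
    fun j _ => hx (τ + j)
  rcases horizon_eq_or_exists_mem (Ks := Ks) (t := t) hM with hLt | ⟨-, s, hs, hτs, hst⟩
  · have hτ0 : τ = 0 := by omega
    have h := (hI.normSq_sub_le (xa := fun k => x (τ + k)) (xb := rollout f u ω τ z)
      (ua := fun k => u (τ + k)) hwW (fun j _ => hwW _) hω hxa (fun j _ => rfl) i₀).trans
      (iossBound_mono (S' := {k | τ + k ∈ Ks}) hR hη L fun j _ hj => by
        rwa [Set.mem_ofPred_eq, hτ0, zero_add, hKs])
    exact h.trans (le_mul_of_one_le_left ((normSq_nonneg hP1 _).trans h) hκ)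
  · rw [hKs] at hs
    obtain ⟨c, hτμ, hμs, hμd⟩ := exists_sampleTime_near hs (hτ ▸ hτs)
    exact hI.normSq_sub_le_of_split (xa := fun k => x (τ + k)) (xb := rollout f u ω τ z)
      (ua := fun k => u (τ + k)) (wa := fun k => w (τ + k)) (wb := fun k => ω (τ + k))
      hwW hQ hR hη hκ hP21 (T := sampleTime d i₀ c - τ) (i₁ := i₀ + c) (i₂ := i₀ + c + 1)
      (by omega) (fun j hj => hμd.trans (le_of_mem_sampleSet hj))
      (fun j hj => by
        rw [Set.mem_ofPred_eq, ← add_assoc, Nat.add_sub_cancel' hτμ, hKs]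
        exact sampleTime_add_mem_sampleSet hj)
      (fun j _ => hwW _) hω hxa (fun j _ => rfl)

theorem normSq_sub_rollout_le_of_optimal (hI : SampleIOSS f hout W d P1 P2 Q R η)
    {i₀ : ℕ} (hKs : Ks = sampleSet d i₀) (hP1 : P1.PosSemidef) (hP2 : P2.PosSemidef)
    (hQ : Q.PosSemidef) (hR : R.PosSemidef) (hη : 0 ≤ η) {κ : ℝ} (hκ : 1 ≤ κ)
    (hP21 : ∀ z, normSq P2 z ≤ κ * normSq P1 z) {M : ℕ} (hM : 0 < M)
    (hx : ∀ t, x (t + 1) = f (x t) (u t) (w t)) (hy : ∀ t, y t = hout (x t) (u t) (w t))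
    (hxX : ∀ t, x t ∈ X) (hwW : ∀ t, w t ∈ W) (hyY : ∀ t, y t ∈ Y)
    {t : ℕ} {prior z : Fin n → ℝ} {ω : ℕ → Fin q → ℝ}
    (hfeas : Feasible f hout X W Y u t (horizon Ks M t) z ω)
    (hopt : ∀ z' ω', Feasible f hout X W Y u t (horizon Ks M t) z' ω' →
      mheCost f hout P2 Q R η Ks u y prior t (horizon Ks M t) z ω ≤
        mheCost f hout P2 Q R η Ks u y prior t (horizon Ks M t) z' ω') :
    normSq P1 (x t - rollout f u ω (t - horizon Ks M t) z (horizon Ks M t)) ≤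
      4 * κ * (η ^ horizon Ks M t * normSq P2 (x (t - horizon Ks M t) - prior)
        + ∑ k ∈ range (horizon Ks M t),
            η ^ (horizon Ks M t - k - 1) * normSq Q (w (t - horizon Ks M t + k))) := by
  have hwin := hI.normSq_sub_rollout_le (z := z) hKs hP1 hQ hR hη hκ hP21 hM hx hwW hfeas.2.1
  have hfit := iossBound_le_mheCost_add (f := f) (R := R) (Ks := Ks) hP2 hQ hη hy prior z ω t
    (horizon Ks M t)
  have hcost := (hopt _ _ (feasible_of_trajectory hx hy hxX hwW hyY t _)).trans_eq
    (mheCost_of_trajectory hx hy prior t _)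
  have := mul_le_mul_of_nonneg_left (hfit.trans (add_le_add le_rfl hcost)) (zero_le_one.trans hκ)
  linarith

end MHE

theorem le_of_horizon_recursion {e b a : ℕ → ℝ} {L : ℕ → ℕ} {c κ η ρ : ℝ} (hη : 0 ≤ η)
    (hηρ : η ≤ ρ) (hc : 0 ≤ c) (hκ : 0 ≤ κ) (ha : ∀ j, 0 ≤ a j) (hb₀ : 0 ≤ b 0)
    (hL : ∀ t, L t ≤ t) (hLpos : ∀ t, 0 < t → 0 < L t) (hb : ∀ t, b t ≤ κ * e t)
    (hcontr : ∀ t, L t < t → c * κ * η ^ L t ≤ ρ ^ L t)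
    (hrec : ∀ t, e t ≤ c * (η ^ L t * b (t - L t)
      + ∑ k ∈ range (L t), η ^ (L t - k - 1) * a (t - L t + k))) (t : ℕ) :
    e t ≤ c * (ρ ^ t * b 0 + ∑ j ∈ range t, ρ ^ (t - j - 1) * a j) := by
  induction t using Nat.strong_induction_on with
  | _ t ih =>
  set Φ := fun s => ρ ^ s * b 0 + ∑ j ∈ range s, ρ ^ (s - j - 1) * a j
  have hρ : 0 ≤ ρ := hη.trans hηρ
  have hΦ : ∀ s, 0 ≤ Φ s := fun s =>
    add_nonneg (mul_nonneg (pow_nonneg hρ _) hb₀)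
      (sum_nonneg fun j _ => mul_nonneg (pow_nonneg hρ _) (ha j))
  obtain ⟨τ, hτ⟩ : ∃ τ, τ + L t = t := ⟨t - L t, Nat.sub_add_cancel (hL t)⟩
  have hrec_t := hrec t
  rw [show t - L t = τ by omega] at hrec_t
  have hsplit : Φ t = ρ ^ L t * Φ τ + ∑ k ∈ range (L t), ρ ^ (L t - k - 1) * a (τ + k) := by
    conv_lhs => rw [← hτ]
    simp only [Φ, sum_range_add_pow_mul, pow_add]
    ring
  have hprior : η ^ L t * b τ ≤ ρ ^ L t * Φ τ := by
    rcases (hL t).lt_or_eq with hlt | heq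
    · have hτt : τ < t := by have := hLpos t (by omega); omega
      calc η ^ L t * b τ ≤ η ^ L t * (κ * (c * Φ τ)) :=
            mul_le_mul_of_nonneg_left ((hb τ).trans (mul_le_mul_of_nonneg_left (ih τ hτt) hκ))
              (pow_nonneg hη _)
        _ = c * κ * η ^ L t * Φ τ := by ring
        _ ≤ ρ ^ L t * Φ τ := mul_le_mul_of_nonneg_right (hcontr t hlt) (hΦ τ)
    · have hτ0 : τ = 0 := by omega
      simp only [hτ0, Φ, pow_zero, one_mul, range_zero, sum_empty, add_zero]
      exact mul_le_mul_of_nonneg_right (pow_le_pow_left₀ hη hηρ _) hb₀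
  have hwindow : ∑ k ∈ range (L t), η ^ (L t - k - 1) * a (τ + k) ≤
      ∑ k ∈ range (L t), ρ ^ (L t - k - 1) * a (τ + k) :=
    sum_le_sum fun k _ => mul_le_mul_of_nonneg_right (pow_le_pow_left₀ hη hηρ _) (ha _)
  calc e t ≤ c * (η ^ L t * b τ + ∑ k ∈ range (L t), η ^ (L t - k - 1) * a (τ + k)) := hrec_t
    _ ≤ c * Φ t := by rw [hsplit]; gcongr

lemma euclNorm_le_of_normSq_le {k l : ℕ} {P1 P2 : Matrix (Fin k) (Fin k) ℝ}
    {Q : Matrix (Fin l) (Fin l) ℝ} {c lam₁ lam₂ lamQ ρ : ℝ} (hc : 0 ≤ c) (hρ : 0 ≤ ρ)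
    (hlam₁ : 0 < lam₁) (hlam₂ : 0 ≤ lam₂) (hlamQ : 0 ≤ lamQ)
    (hP1 : ∀ v, lam₁ * euclNorm v ^ 2 ≤ normSq P1 v)
    (hP2 : ∀ v, normSq P2 v ≤ lam₂ * euclNorm v ^ 2)
    (hQ : ∀ v, normSq Q v ≤ lamQ * euclNorm v ^ 2) {e e₀ : Fin k → ℝ} {w : ℕ → Fin l → ℝ}
    {t : ℕ} (h : normSq P1 e ≤
      4 * c * (ρ ^ t * normSq P2 e₀ + ∑ j ∈ range t, ρ ^ (t - j - 1) * normSq Q (w j))) :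
    euclNorm e ≤ 2 * √(c * lam₂ / lam₁) * √ρ ^ t * euclNorm e₀
      + ∑ j ∈ range t, 2 * √(c * lamQ / lam₁) * √ρ ^ (t - j - 1) * euclNorm (w j) := by
  have hC₂ : 0 ≤ c * lam₂ / lam₁ := by positivity
  have hCQ : 0 ≤ c * lamQ / lam₁ := by positivity
  refine le_add_sum_of_sq_le (mul_nonneg (by positivity) (euclNorm_nonneg _))
    (fun j _ => mul_nonneg (by positivity) (euclNorm_nonneg _)) ?_
  rw [two_mul_sqrt_mul_sqrt_pow_mul_sq hC₂ hρ]
  simp only [two_mul_sqrt_mul_sqrt_pow_mul_sq hCQ hρ]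
  refine le_of_mul_le_mul_left ?_ hlam₁
  have hsum : ∑ j ∈ range t, ρ ^ (t - j - 1) * normSq Q (w j) ≤
      ∑ j ∈ range t, ρ ^ (t - j - 1) * (lamQ * euclNorm (w j) ^ 2) :=
    sum_le_sum fun j _ => mul_le_mul_of_nonneg_left (hQ _) (pow_nonneg hρ _)
  calc lam₁ * euclNorm e ^ 2 ≤ normSq P1 e := hP1 e
    _ ≤ 4 * c * (ρ ^ t * (lam₂ * euclNorm e₀ ^ 2)
          + ∑ j ∈ range t, ρ ^ (t - j - 1) * (lamQ * euclNorm (w j) ^ 2)) := by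
        grw [h, hP2, hsum]
    _ = _ := by
        simp only [mul_add, mul_sum]
        congr 1
        · field_simp
        · exact sum_congr rfl fun j _ => by field_simp

theorem sampleBased_MHE_is_RGES_general
    {n m q p : ℕ}
    (f : (Fin n → ℝ) → (Fin m → ℝ) → (Fin q → ℝ) → (Fin n → ℝ))
    (hout : (Fin n → ℝ) → (Fin m → ℝ) → (Fin q → ℝ) → (Fin p → ℝ))
    (X : Set (Fin n → ℝ)) (W : Set (Fin q → ℝ)) (Y : Set (Fin p → ℝ))
    -- sampling collection generated by a bounded sequence
    (d : ℕ → ℕ)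
    -- i-IOSS parameters
    (P1 P2 : Matrix (Fin n) (Fin n) ℝ) (Q : Matrix (Fin q) (Fin q) ℝ)
    (R : Matrix (Fin p) (Fin p) ℝ) (η : ℝ)
    (hP1 : P1.PosDef) (hP2 : P2.PosDef) (hQ : Q.PosSemidef) (hR : R.PosSemidef)
    (hη0 : 0 ≤ η)
    -- sample-based exponential i-IOSS with respect to every K_i
    (hIOSS : ∀ (xa xb : ℕ → Fin n → ℝ) (ua : ℕ → Fin m → ℝ) (wa wb : ℕ → Fin q → ℝ),
      (∀ t, wa t ∈ W) → (∀ t, wb t ∈ W) →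
      (∀ t, xa (t + 1) = f (xa t) (ua t) (wa t)) →
      (∀ t, xb (t + 1) = f (xb t) (ua t) (wb t)) →
      ∀ t i : ℕ,
        normSq P1 (xa t - xb t) ≤
          η ^ t * normSq P2 (xa 0 - xb 0)
          + ∑ j ∈ Finset.range t, η ^ (t - j - 1) * normSq Q (wa j - wb j)
          + ∑ j ∈ Finset.range t, Set.indicator (sampleSet d i)
              (fun j => η ^ (t - j - 1) *
                normSq R (hout (xa j) (ua j) (wa j) - hout (xb j) (ua j) (wb j))) j)
    -- the measurement times form an element K_s ∈ K
    (Ks : Set ℕ) (i0 : ℕ) (hKs : Ks = sampleSet d i0)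
    -- the true trajectory satisfies the constraints
    (u : ℕ → Fin m → ℝ) (w : ℕ → Fin q → ℝ) (x : ℕ → Fin n → ℝ) (y : ℕ → Fin p → ℝ)
    (hxdyn : ∀ t, x (t + 1) = f (x t) (u t) (w t))
    (hy : ∀ t, y t = hout (x t) (u t) (w t))
    (hxX : ∀ t, x t ∈ X) (hwW : ∀ t, w t ∈ W) (hyY : ∀ t, y t ∈ Y)
    -- horizon choice
    (M : ℕ)
    -- eigenvalue constants: λ_max(P2,P1), λ_max(P2), λ_max(Q), λ_min(P1)
    (lam21 lamP2max lamQmax lamP1min : ℝ)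
    (hlam21 : IsGreatest {l : ℝ | (P2 - l • P1).det = 0} lam21)
    (hlamP2max : IsGreatest {l : ℝ | (P2 - l • (1 : Matrix (Fin n) (Fin n) ℝ)).det = 0} lamP2max)
    (hlamQmax : IsGreatest {l : ℝ | (Q - l • (1 : Matrix (Fin q) (Fin q) ℝ)).det = 0} lamQmax)
    (hlamP1min : IsLeast {l : ℝ | (P1 - l • (1 : Matrix (Fin n) (Fin n) ℝ)).det = 0} lamP1min)
    -- contraction condition defining ρ ∈ [0,1): ρ^M = 4 λ_max(P2,P1)² η^M < 1
    (ρ : ℝ) (hρ0 : 0 ≤ ρ) (hρM : ρ ^ M = 4 * lam21 ^ 2 * η ^ M)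
    -- the estimates are generated by the sample-based MHE scheme
    (zstar : ℕ → Fin n → ℝ) (ωstar : ℕ → ℕ → Fin q → ℝ) (xhat : ℕ → Fin n → ℝ)
    (hfeas : ∀ t, Feasible f hout X W Y u t (horizon Ks M t) (zstar t) (ωstar t))
    (hopt : ∀ t (z' : Fin n → ℝ) (ω' : ℕ → Fin q → ℝ),
      Feasible f hout X W Y u t (horizon Ks M t) z' ω' →
      mheCost f hout P2 Q R η Ks u y (xhat (t - horizon Ks M t)) t (horizon Ks M t)
          (zstar t) (ωstar t)
        ≤ mheCost f hout P2 Q R η Ks u y (xhat (t - horizon Ks M t)) t (horizon Ks M t) z' ω')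
    (hxhat : ∀ t, xhat t = rollout f u (ωstar t) (t - horizon Ks M t) (zstar t) (horizon Ks M t)) :
    -- RGES bound on the estimation error ê_t = x_t − x̂_t
    ∀ t, euclNorm (x t - xhat t) ≤
      2 * Real.sqrt (lam21 * lamP2max / lamP1min) * Real.sqrt ρ ^ t * euclNorm (x 0 - xhat 0)
      + ∑ j ∈ Finset.range t,
          2 * Real.sqrt (lam21 * lamQmax / lamP1min) * Real.sqrt ρ ^ (t - j - 1) * euclNorm (w j) := by
  have hI : SampleIOSS f hout W d P1 P2 Q R η := hIOSS
  have hlam1 : 1 ≤ lam21 := one_le_of_det_sub_smul_eq_zero hP1 (hI.normSq_le_normSq hwW) hlam21.1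
  have hP21 := normSq_le_mul_normSq hP2.isHermitian hP1 hlam21.2
  have hM0 : 0 < M := Nat.pos_of_ne_zero fun hM0 => by subst hM0; nlinarith [hρM]
  have hηρ : η ≤ ρ := le_of_pow_le_pow_left₀ hM0.ne' hρ0 <| by
    rw [hρM]; exact le_mul_of_one_le_left (pow_nonneg hη0 M) (by nlinarith)
  have hrec := le_of_horizon_recursion (e := fun t => normSq P1 (x t - xhat t))
    (b := fun t => normSq P2 (x t - xhat t)) (a := fun j => normSq Q (w j)) (L := horizon Ks M)
    (c := 4 * lam21) (κ := lam21) hη0 hηρ (by positivity) (by positivity)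
    (fun j => normSq_nonneg hQ _) (normSq_nonneg hP2.posSemidef _) (fun t => min_le_left _ _)
    (fun t => horizon_pos hM0) (fun t => hP21 _)
    (fun t ht => by
      obtain hL | ⟨hML, -⟩ := horizon_eq_or_exists_mem (Ks := Ks) (t := t) hM0
      · omega
      · exact mul_pow_le_pow_of_pow_eq hη0 hηρ (by rw [hρM]; ring) hML)
    (fun t => by
      rw [hxhat t]
      exact normSq_sub_rollout_le_of_optimal hI hKs hP1.posSemidef hP2.posSemidef hQ hR hη0
        hlam1 hP21 hM0 hxdyn hy hxX hwW hyY (hfeas t) (hopt t))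
  exact fun t => euclNorm_le_of_normSq_le (by positivity) hρ0
    (pos_of_det_sub_smul_one_eq_zero hP1 hlamP1min.1)
    (nonneg_of_det_sub_smul_one_eq_zero hP2.posSemidef hlamP2max.1)
    (nonneg_of_det_sub_smul_one_eq_zero hQ hlamQmax.1)
    (mul_euclNorm_sq_le_normSq hP1.isHermitian hlamP1min.2)
    (normSq_le_mul_euclNorm_sq hP2.isHermitian hlamP2max.2)
    (normSq_le_mul_euclNorm_sq hQ.isHermitian hlamQmax.2) (hrec t)

/-- Theorem on RGES of sample-based MHE. Under sample-based exponential
i-IOSS with respect to the sampling collection generated by `d`, measurement times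
`Ks ∈ K`, a feasible true trajectory, and a horizon `M ≥ d_max` with
`ρ^M := 4 λ_max(P2,P1)² η^M < 1`, the MHE estimation error `ê_t = x_t − x̂_t` satisfies the
robust global exponential stability bound. -/
theorem sampleBased_MHE_is_RGES
    {n m q p : ℕ}
    (f : (Fin n → ℝ) → (Fin m → ℝ) → (Fin q → ℝ) → (Fin n → ℝ))
    (hout : (Fin n → ℝ) → (Fin m → ℝ) → (Fin q → ℝ) → (Fin p → ℝ))
    (X : Set (Fin n → ℝ)) (W : Set (Fin q → ℝ)) (Y : Set (Fin p → ℝ))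
    -- sampling collection generated by a bounded sequence
    (d : ℕ → ℕ) (dmax : ℕ) (hd : ∀ i, d i ≤ dmax)
    -- i-IOSS parameters
    (P1 P2 : Matrix (Fin n) (Fin n) ℝ) (Q : Matrix (Fin q) (Fin q) ℝ)
    (R : Matrix (Fin p) (Fin p) ℝ) (η : ℝ)
    (hP1 : P1.PosDef) (hP2 : P2.PosDef) (hQ : Q.PosSemidef) (hR : R.PosSemidef)
    (hη0 : 0 ≤ η) (hη1 : η < 1)
    -- sample-based exponential i-IOSS with respect to every K_i
    (hIOSS : ∀ (xa xb : ℕ → Fin n → ℝ) (ua : ℕ → Fin m → ℝ) (wa wb : ℕ → Fin q → ℝ),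
      (∀ t, wa t ∈ W) → (∀ t, wb t ∈ W) →
      (∀ t, xa (t + 1) = f (xa t) (ua t) (wa t)) →
      (∀ t, xb (t + 1) = f (xb t) (ua t) (wb t)) →
      ∀ t i : ℕ,
        normSq P1 (xa t - xb t) ≤
          η ^ t * normSq P2 (xa 0 - xb 0)
          + ∑ j ∈ Finset.range t, η ^ (t - j - 1) * normSq Q (wa j - wb j)
          + ∑ j ∈ Finset.range t, Set.indicator (sampleSet d i)
              (fun j => η ^ (t - j - 1) *
                normSq R (hout (xa j) (ua j) (wa j) - hout (xb j) (ua j) (wb j))) j)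
    -- the measurement times form an element K_s ∈ K
    (Ks : Set ℕ) (i0 : ℕ) (hKs : Ks = sampleSet d i0)
    -- the true trajectory satisfies the constraints
    (u : ℕ → Fin m → ℝ) (w : ℕ → Fin q → ℝ) (x : ℕ → Fin n → ℝ) (y : ℕ → Fin p → ℝ)
    (hxdyn : ∀ t, x (t + 1) = f (x t) (u t) (w t))
    (hy : ∀ t, y t = hout (x t) (u t) (w t))
    (hxX : ∀ t, x t ∈ X) (hwW : ∀ t, w t ∈ W) (hyY : ∀ t, y t ∈ Y)
    -- horizon choice
    (M : ℕ) (hM : dmax ≤ M)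
    -- eigenvalue constants: λ_max(P2,P1), λ_max(P2), λ_max(Q), λ_min(P1)
    (lam21 lamP2max lamQmax lamP1min : ℝ)
    (hlam21 : IsGreatest {l : ℝ | (P2 - l • P1).det = 0} lam21)
    (hlamP2max : IsGreatest {l : ℝ | (P2 - l • (1 : Matrix (Fin n) (Fin n) ℝ)).det = 0} lamP2max)
    (hlamQmax : IsGreatest {l : ℝ | (Q - l • (1 : Matrix (Fin q) (Fin q) ℝ)).det = 0} lamQmax)
    (hlamP1min : IsLeast {l : ℝ | (P1 - l • (1 : Matrix (Fin n) (Fin n) ℝ)).det = 0} lamP1min)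
    -- contraction condition defining ρ ∈ [0,1): ρ^M = 4 λ_max(P2,P1)² η^M < 1
    (hsmall : 4 * lam21 ^ 2 * η ^ M < 1)
    (ρ : ℝ) (hρ0 : 0 ≤ ρ) (hρ1 : ρ < 1) (hρM : ρ ^ M = 4 * lam21 ^ 2 * η ^ M)
    -- the estimates are generated by the sample-based MHE scheme
    (zstar : ℕ → Fin n → ℝ) (ωstar : ℕ → ℕ → Fin q → ℝ) (xhat : ℕ → Fin n → ℝ)
    (hfeas : ∀ t, Feasible f hout X W Y u t (horizon Ks M t) (zstar t) (ωstar t))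
    (hopt : ∀ t (z' : Fin n → ℝ) (ω' : ℕ → Fin q → ℝ),
      Feasible f hout X W Y u t (horizon Ks M t) z' ω' →
      mheCost f hout P2 Q R η Ks u y (xhat (t - horizon Ks M t)) t (horizon Ks M t)
          (zstar t) (ωstar t)
        ≤ mheCost f hout P2 Q R η Ks u y (xhat (t - horizon Ks M t)) t (horizon Ks M t) z' ω')
    (hxhat : ∀ t, xhat t = rollout f u (ωstar t) (t - horizon Ks M t) (zstar t) (horizon Ks M t)) :
    -- RGES bound on the estimation error ê_t = x_t − x̂_t
    ∀ t, euclNorm (x t - xhat t) ≤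
      2 * Real.sqrt (lam21 * lamP2max / lamP1min) * Real.sqrt ρ ^ t * euclNorm (x 0 - xhat 0)
      + ∑ j ∈ Finset.range t,
          2 * Real.sqrt (lam21 * lamQmax / lamP1min) * Real.sqrt ρ ^ (t - j - 1) * euclNorm (w j) :=
  sampleBased_MHE_is_RGES_general f hout X W Y d P1 P2 Q R η hP1 hP2 hQ hR hη0 hIOSS Ks i0 hKs u w x
    y hxdyn hy hxX hwW hyY M lam21 lamP2max lamQmax lamP1min hlam21 hlamP2max hlamQmax hlamP1min ρ
    hρ0 hρM zstar ωstar xhat hfeas hopt hxhat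
end
end

section
/- Let A ∈ ℝ^{n×n}, C ∈ ℝ^{p×n} and T ∈ ℕ be fixed. Then there exists a constant ᾱ > 0 such that for every nonempty subset S ⊆ {0, 1, …, T} for which the stacked matrix with block rows C A^{s}, s ∈ S, has full column rank n, there exist matrices α_s ∈ ℝ^{p×p}, s ∈ S, with ‖α_s‖ ≤ ᾱ for all s ∈ S and C A^{T+1} = Σ_{s∈S} α_s C A^{s}. -/
open scoped Classical

noncomputable section

/-- Frobenius norm of a real matrix (a fixed choice of matrix norm). -/
def matNorm {p : ℕ} (M : Matrix (Fin p) (Fin p) ℝ) : ℝ :=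
  Real.sqrt (∑ i, ∑ j, M i j ^ 2)

/-!
A stacked matrix of full column rank `n` has a left inverse `L`, so any `R` with `n` columns
factors as `R = (R L) M`; cutting `R L` into blocks along the block rows of the stack gives the
coefficients `α_s`. The bound is uniform because there are only finitely many `S ⊆ {0,…,T}`:
fix one solution for each admissible `S` and take the largest norm that occurs.
-/

namespace Matrix

variable {ι l m n K : Type*} [Field K] [Fintype m]

theorem exists_mul_eq_one_of_rank_eq_card [Fintype n] [DecidableEq n] (M : Matrix m n K)
    (h : M.rank = Fintype.card n) : ∃ L : Matrix n m K, L * M = 1 := by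
  rw [← vecMul_surjective_iff_exists_left_inverse, ← coe_vecMulLinear,
    ← LinearMap.range_eq_top, range_vecMulLinear]
  apply Submodule.eq_top_of_finrank_eq
  rw [← rank_eq_finrank_span_row, h, Module.finrank_fintype_fun_eq_card]

def blockStack (S : Finset ι) (G : ι → Matrix m n K) : Matrix (S × m) n K :=
  of fun sk j => G sk.1 sk.2 j

theorem mul_blockStack (S : Finset ι) (G : ι → Matrix m n K) (X : Matrix l (S × m) K) :
    X * blockStack S G = ∑ s : S, X.submatrix id (fun k => (s, k)) * G s := by
  ext i j
  simp [blockStack, mul_apply, Fintype.sum_prod_type, sum_apply]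

theorem exists_eq_sum_mul_of_rank_blockStack [Fintype n] (S : Finset ι) (G : ι → Matrix m n K)
    (h : (blockStack S G).rank = Fintype.card n) (R : Matrix l n K) :
    ∃ α : ι → Matrix l m K, R = ∑ s ∈ S, α s * G s := by
  obtain ⟨L, hL⟩ := exists_mul_eq_one_of_rank_eq_card _ h
  refine ⟨fun s => if hs : s ∈ S then (R * L).submatrix id (fun k => (⟨s, hs⟩, k)) else 0,
    ?_⟩
  calc R = R * L * blockStack S G := by rw [Matrix.mul_assoc, hL, Matrix.mul_one]
    _ = _ := by
      rw [mul_blockStack, ← Finset.sum_coe_sort S]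
      exact Finset.sum_congr rfl fun s _ => by simp

end Matrix

theorem matNorm_nonneg {p : ℕ} (M : Matrix (Fin p) (Fin p) ℝ) : 0 ≤ matNorm M :=
  Real.sqrt_nonneg _

theorem Finset.exists_pos_forall_exists_le {ι β : Type*} (𝒮 : Finset ι)
    (P : ι → β → Prop) (f : ι → β → ℝ) (h : ∀ i ∈ 𝒮, ∃ b, P i b) :
    ∃ c > 0, ∀ i ∈ 𝒮, ∃ b, P i b ∧ f i b ≤ c := by
  choose b hb using h
  obtain ⟨M, hM⟩ := Finite.exists_le fun i : 𝒮 => f i (b i i.2)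
  exact ⟨max M 1, by positivity, fun i hi =>
    ⟨b i hi, hb i hi, (hM ⟨i, hi⟩).trans (le_max_left _ _)⟩⟩

/-- For fixed `A, C, T`, there is a uniform constant `ᾱ > 0` such that for
every nonempty subset `S ⊆ {0,…,T}` whose stacked matrix (block rows `C A^s`, `s ∈ S`)
has full column rank `n`, there exist coefficient matrices `α_s` with `‖α_s‖ ≤ ᾱ` and
`C A^{T+1} = Σ_{s ∈ S} α_s C A^s`. -/
theorem uniformly_bounded_row_combinations
    (n p T : ℕ) (A : Matrix (Fin n) (Fin n) ℝ) (C : Matrix (Fin p) (Fin n) ℝ) :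
    ∃ αbar : ℝ, 0 < αbar ∧
      ∀ S : Finset ℕ, S.Nonempty → S ⊆ Finset.range (T + 1) →
        (Matrix.of fun (ri : S × Fin p) (j : Fin n) =>
          (C * A ^ (ri.1 : ℕ)) ri.2 j).rank = n →
        ∃ α : ℕ → Matrix (Fin p) (Fin p) ℝ,
          (∀ s ∈ S, matNorm (α s) ≤ αbar) ∧
          C * A ^ (T + 1) = ∑ s ∈ S, α s * (C * A ^ s) := by
  let admissible := (Finset.range (T + 1)).powerset.filter fun S =>
    (Matrix.blockStack S fun s => C * A ^ s).rank = n
  obtain ⟨αbar, hpos, hbound⟩ := admissible.exists_pos_forall_exists_le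
    (fun S (α : ℕ → Matrix (Fin p) (Fin p) ℝ) =>
      C * A ^ (T + 1) = ∑ s ∈ S, α s * (C * A ^ s))
    (fun S α => ∑ s ∈ S, matNorm (α s))
    fun S hS => Matrix.exists_eq_sum_mul_of_rank_blockStack S _
      (by rw [Fintype.card_fin]; exact (Finset.mem_filter.1 hS).2) _
  refine ⟨αbar, hpos, fun S _ hST hrank => ?_⟩
  obtain ⟨α, hα, hle⟩ :=
    hbound S (Finset.mem_filter.2 ⟨Finset.mem_powerset.2 hST, hrank⟩)
  refine ⟨α, fun s hs => le_trans ?_ hle, hα⟩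
  exact Finset.single_le_sum (f := fun s => matNorm (α s)) (fun _ _ => matNorm_nonneg _) hs
end
end

section
/- Let ρ ∈ [0,1), c ≥ 0, W_0 ≥ 0, let M ≥ 1 be an integer, and let V, s : ℕ → ℝ_{≥0} be nonnegative sequences. Suppose: (i) for every t with 0 ≤ t < M, V_t ≤ c (ρ^t W_0 + Σ_{j=0}^{t−1} ρ^{t−j−1} s_j); and (ii) for every t ≥ M there exists an integer m_t with M ≤ m_t ≤ t such that V_t ≤ ρ^{m_t} V_{t−m_t} + Σ_{j=t−m_t}^{t−1} ρ^{t−j−1} s_j. If additionally c ≥ 1, then for all t ≥ 0: V_t ≤ c (ρ^t W_0 + Σ_{j=0}^{t−1} ρ^{t−j−1} s_j). -/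
/-! Write `B t = c (ρ^t W₀ + ∑_{j<t} ρ^{t-j-1} s_j)`. Splitting the sum at `t - m` gives
`B t = ρ^m B (t - m) + c ∑_{t-m ≤ j < t} ρ^{t-j-1} s_j`, so the window inequality together with
`V (t - m) ≤ B (t - m)` yields `V t ≤ B t` as soon as `c ≥ 1`. Since every window has length
`m ≥ M ≥ 1`, strong induction on `t` reduces every time to the initial phase `t < M`. -/

open Finset

theorem Nat.forall_of_le_window_step {P : ℕ → Prop} {M : ℕ} (hM : 1 ≤ M)
    (hinit : ∀ t, t < M → P t)
    (hstep : ∀ t, M ≤ t → ∃ m, M ≤ m ∧ m ≤ t ∧ (P (t - m) → P t)) :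
    ∀ t, P t := by
  intro t
  induction t using Nat.strong_induction_on with
  | _ t ih =>
    rcases lt_or_ge t M with ht | ht
    · exact hinit t ht
    · obtain ⟨m, hMm, hmt, hprev⟩ := hstep t ht
      exact hprev (ih (t - m) (by omega))

theorem sum_range_pow_sub_mul_eq_pow_mul_add_sum_Ico {R : Type*} [CommSemiring R]
    (ρ : R) (s : ℕ → R) {m t : ℕ} (hmt : m ≤ t) :
    ∑ j ∈ range t, ρ ^ (t - j - 1) * s j
      = ρ ^ m * ∑ j ∈ range (t - m), ρ ^ (t - m - j - 1) * s j
        + ∑ j ∈ Ico (t - m) t, ρ ^ (t - j - 1) * s j := by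
  rw [← sum_range_add_sum_Ico _ (Nat.sub_le t m), mul_sum]
  congr 1
  refine sum_congr rfl fun j hj => ?_
  rw [← mul_assoc, ← pow_add]
  congr 2
  have := mem_range.mp hj
  omega

theorem le_exp_bound_of_window {ρ c W0 : ℝ} {V s : ℕ → ℝ} (hρ0 : 0 ≤ ρ) (hc : 1 ≤ c)
    (hs : ∀ t, 0 ≤ s t) {m t : ℕ} (hmt : m ≤ t)
    (hprev : V (t - m) ≤
      c * (ρ ^ (t - m) * W0 + ∑ j ∈ range (t - m), ρ ^ (t - m - j - 1) * s j))
    (hwin : V t ≤ ρ ^ m * V (t - m) + ∑ j ∈ Ico (t - m) t, ρ ^ (t - j - 1) * s j) :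
    V t ≤ c * (ρ ^ t * W0 + ∑ j ∈ range t, ρ ^ (t - j - 1) * s j) := by
  have htail : ∑ j ∈ Ico (t - m) t, ρ ^ (t - j - 1) * s j
      ≤ c * ∑ j ∈ Ico (t - m) t, ρ ^ (t - j - 1) * s j :=
    le_mul_of_one_le_left (sum_nonneg fun j _ => mul_nonneg (pow_nonneg hρ0 _) (hs j)) hc
  have hpow : ρ ^ t = ρ ^ m * ρ ^ (t - m) := by rw [← pow_add, Nat.add_sub_cancel' hmt]
  rw [sum_range_pow_sub_mul_eq_pow_mul_add_sum_Ico ρ s hmt, hpow]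
  have hcontract := mul_le_mul_of_nonneg_left hprev (pow_nonneg hρ0 m)
  linarith

theorem window_contraction_to_global_bound_general
    (ρ c W0 : ℝ) (hρ0 : 0 ≤ ρ)
    (M : ℕ) (hM : 1 ≤ M)
    (V s : ℕ → ℝ) (hs : ∀ t, 0 ≤ s t)
    (hinit : ∀ t, t < M →
      V t ≤ c * (ρ ^ t * W0 + ∑ j ∈ Finset.range t, ρ ^ (t - j - 1) * s j))
    (hwin : ∀ t, M ≤ t → ∃ mt : ℕ, M ≤ mt ∧ mt ≤ t ∧
      V t ≤ ρ ^ mt * V (t - mt) + ∑ j ∈ Finset.Ico (t - mt) t, ρ ^ (t - j - 1) * s j)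
    (hc : 1 ≤ c) :
    ∀ t, V t ≤ c * (ρ ^ t * W0 + ∑ j ∈ Finset.range t, ρ ^ (t - j - 1) * s j) := by
  refine Nat.forall_of_le_window_step hM hinit fun t ht => ?_
  obtain ⟨m, hMm, hmt, hVt⟩ := hwin t ht
  exact ⟨m, hMm, hmt, fun hprev => le_exp_bound_of_window hρ0 hc hs hmt hprev hVt⟩

/-- Recursive contraction argument: a per-window moving-horizon bound
(valid on windows of length at least `M`) together with an initial-phase bound propagates
to a global exponential bound (empty sums are zero). -/
theorem window_contraction_to_global_bound
    (ρ c W0 : ℝ) (hρ0 : 0 ≤ ρ) (hρ1 : ρ < 1) (hW0 : 0 ≤ W0)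
    (M : ℕ) (hM : 1 ≤ M)
    (V s : ℕ → ℝ) (hV : ∀ t, 0 ≤ V t) (hs : ∀ t, 0 ≤ s t)
    (hinit : ∀ t, t < M →
      V t ≤ c * (ρ ^ t * W0 + ∑ j ∈ Finset.range t, ρ ^ (t - j - 1) * s j))
    (hwin : ∀ t, M ≤ t → ∃ mt : ℕ, M ≤ mt ∧ mt ≤ t ∧
      V t ≤ ρ ^ mt * V (t - mt) + ∑ j ∈ Finset.Ico (t - mt) t, ρ ^ (t - j - 1) * s j)
    (hc : 1 ≤ c) :
    ∀ t, V t ≤ c * (ρ ^ t * W0 + ∑ j ∈ Finset.range t, ρ ^ (t - j - 1) * s j) :=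
  window_contraction_to_global_bound_general ρ c W0 hρ0 M hM V s hs hinit hwin hc
end

section
/- Let η ∈ [0,1) and let a, c : ℕ → ℝ_{≥0} be nonnegative sequences and b ≥ 0 a constant such that for all t ≥ 0: a_t ≤ b η^t + Σ_{j=0}^{t−1} η^{t−j−1} c_j. Then for every μ ∈ (η, 1) there exists a constant κ > 0 (depending only on η and μ) such that for all t ≥ 0: a_t ≤ max{ κ b μ^t, max_{j ∈ [0,t−1]} κ c_j μ^{t−j−1} }. Conversely, if a_t ≤ max{ b μ^t, max_{j ∈ [0,t−1]} c_j μ^{t−j−1} } for all t, then a_t ≤ b μ^t + Σ_{j=0}^{t−1} μ^{t−j−1} c_j for all t. Hence the sum-based and max-based formulations of exponentially discounted bounds are equivalent up to adjustment of the constants and decay rate. -/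
noncomputable section

/-- Maximum of `g` over a finite index set (zero if the set is empty). -/
def maxOver (s : Finset ℕ) (g : ℕ → ℝ) : ℝ := s.fold max 0 g

/-!
Write `η = r μ` with `r = η / μ < 1`. Each term `η^(t-j-1) c_j` of the sum is then
`r^(t-j-1)` times the corresponding term `c_j μ^(t-j-1)` of the maximum, so the geometric weights
sum to at most `1 / (1 - r)`, and a sum of two terms is at most twice their maximum; this gives
`κ = 2 / (1 - η / μ)`. Conversely, a maximum of nonnegative terms is at most their sum.
-/

open Finset

section MaxOver

variable {s : Finset ℕ} {g : ℕ → ℝ}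

lemma maxOver_nonneg (s : Finset ℕ) (g : ℕ → ℝ) : 0 ≤ maxOver s g :=
  (le_fold_max _).2 (Or.inl le_rfl)

lemma le_maxOver {j : ℕ} (hj : j ∈ s) : g j ≤ maxOver s g :=
  (le_fold_max _).2 (Or.inr ⟨j, hj, le_rfl⟩)

lemma maxOver_le {x : ℝ} (hx : 0 ≤ x) (h : ∀ j ∈ s, g j ≤ x) : maxOver s g ≤ x :=
  (fold_max_le _).2 ⟨hx, h⟩

lemma maxOver_const_mul {κ : ℝ} (hκ : 0 ≤ κ) :
    maxOver s (fun j => κ * g j) = κ * maxOver s g := by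
  simpa [maxOver] using fold_hom (s := s) (b := 0) (f := g) (m := (κ * ·))
    fun x y => mul_max_of_nonneg x y hκ

lemma max_maxOver_le_add_sum {x : ℝ} (hx : 0 ≤ x) (hg : ∀ j ∈ s, 0 ≤ g j) :
    max x (maxOver s g) ≤ x + ∑ j ∈ s, g j := by
  have hsum : 0 ≤ ∑ j ∈ s, g j := sum_nonneg hg
  refine max_le (le_add_of_nonneg_right hsum) (maxOver_le (add_nonneg hx hsum) fun j hj => ?_)
  exact (single_le_sum hg hj).trans (le_add_of_nonneg_left hx)

end MaxOver

lemma sum_range_pow_reflect_le {r : ℝ} (hr0 : 0 ≤ r) (hr1 : r < 1) (t : ℕ) :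
    ∑ j ∈ range t, r ^ (t - j - 1) ≤ 1 / (1 - r) := by
  rw [sum_congr rfl fun j _ => by rw [Nat.sub_right_comm], sum_range_reflect (r ^ ·) t,
    ← Nat.Ico_zero_eq_range]
  simpa using geom_sum_Ico_le_of_lt_one (m := 0) (n := t) hr0 hr1

lemma sum_pow_mul_le_maxOver_div {η μ : ℝ} (hη : 0 ≤ η) (hημ : η < μ)
    (c : ℕ → ℝ) (t : ℕ) :
    ∑ j ∈ range t, η ^ (t - j - 1) * c j
      ≤ maxOver (range t) (fun j => c j * μ ^ (t - j - 1)) / (1 - η / μ) := by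
  have hμ : 0 < μ := hη.trans_lt hημ
  set r := η / μ
  set g : ℕ → ℝ := fun j => c j * μ ^ (t - j - 1)
  set M := maxOver (range t) g
  have hr0 : 0 ≤ r := div_nonneg hη hμ.le
  calc ∑ j ∈ range t, η ^ (t - j - 1) * c j
      = ∑ j ∈ range t, r ^ (t - j - 1) * g j := by
        refine sum_congr rfl fun j _ => ?_
        simp only [r, g, div_pow]
        field_simp
    _ ≤ ∑ j ∈ range t, r ^ (t - j - 1) * M :=
        sum_le_sum fun j hj => mul_le_mul_of_nonneg_left (le_maxOver hj) (pow_nonneg hr0 _)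
    _ ≤ 1 / (1 - r) * M := by
        rw [← sum_mul]
        exact mul_le_mul_of_nonneg_right
          (sum_range_pow_reflect_le hr0 ((div_lt_one hμ).2 hημ) t) (maxOver_nonneg _ _)
    _ = M / (1 - r) := one_div_mul_eq_div _ _

lemma add_div_le_max_mul {x y r : ℝ} (hx : 0 ≤ x) (hr0 : 0 ≤ r) (hr1 : r < 1) :
    x + y / (1 - r) ≤ max (2 / (1 - r) * x) (2 / (1 - r) * y) := by
  have h2x : 2 * x ≤ 2 / (1 - r) * x := by
    refine mul_le_mul_of_nonneg_right ?_ hx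
    rw [le_div_iff₀ (by linarith)]
    linarith
  calc x + y / (1 - r) ≤ max (2 * x) (2 * (y / (1 - r))) := by
        rcases le_total x (y / (1 - r)) with h | h
        · exact le_max_of_le_right (by linarith)
        · exact le_max_of_le_left (by linarith)
    _ ≤ max (2 / (1 - r) * x) (2 / (1 - r) * y) :=
        max_le_max h2x (by rw [mul_div_assoc', div_mul_eq_mul_div])

theorem sum_max_discounted_equivalence_general
    (η : ℝ) (hη0 : 0 ≤ η)
    (a c : ℕ → ℝ) (hc : ∀ j, 0 ≤ c j)
    (b : ℝ) (hb : 0 ≤ b) :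
    ∀ μ : ℝ, η < μ → μ < 1 →
      ((∀ t, a t ≤ b * η ^ t + ∑ j ∈ Finset.range t, η ^ (t - j - 1) * c j) →
        ∃ κ : ℝ, 0 < κ ∧
          ∀ t, a t ≤ max (κ * b * μ ^ t)
            (maxOver (Finset.range t) fun j => κ * c j * μ ^ (t - j - 1)))
      ∧ ((∀ t, a t ≤ max (b * μ ^ t)
            (maxOver (Finset.range t) fun j => c j * μ ^ (t - j - 1))) →
          ∀ t, a t ≤ b * μ ^ t + ∑ j ∈ Finset.range t, μ ^ (t - j - 1) * c j) := by
  intro μ hημ _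
  have hμ : 0 < μ := hη0.trans_lt hημ
  have hr0 : 0 ≤ η / μ := div_nonneg hη0 hμ.le
  have hr1 : η / μ < 1 := (div_lt_one hμ).2 hημ
  have hκ : 0 < 2 / (1 - η / μ) := div_pos two_pos (sub_pos.2 hr1)
  refine ⟨fun H => ⟨2 / (1 - η / μ), hκ, fun t => ?_⟩, fun H t => ?_⟩
  · simp_rw [mul_assoc, maxOver_const_mul hκ.le]
    calc a t ≤ b * η ^ t + ∑ j ∈ range t, η ^ (t - j - 1) * c j := H t
      _ ≤ b * μ ^ t + maxOver (range t) (fun j => c j * μ ^ (t - j - 1)) / (1 - η / μ) :=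
          add_le_add (mul_le_mul_of_nonneg_left (pow_le_pow_left₀ hη0 hημ.le t) hb)
            (sum_pow_mul_le_maxOver_div hη0 hημ c t)
      _ ≤ _ := add_div_le_max_mul (by positivity) hr0 hr1
  · simp_rw [mul_comm (μ ^ _) (c _)]
    exact (H t).trans (max_maxOver_le_add_sum (by positivity)
      fun j _ => mul_nonneg (hc j) (pow_nonneg hμ.le _))

/-- Equivalence of the sum-based and max-based formulations of
exponentially discounted bounds, up to adjustment of the constants and decay rate:
if `a_t ≤ b η^t + Σ_{j<t} η^{t-j-1} c_j` for all `t`, then for every `μ ∈ (η, 1)` there is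
`κ > 0` (depending only on `η` and `μ`) with
`a_t ≤ max (κ b μ^t) (max_{j<t} κ c_j μ^{t-j-1})`; conversely, a max-based bound with
rate `μ` implies the corresponding sum-based bound with rate `μ`. -/
theorem sum_max_discounted_equivalence
    (η : ℝ) (hη0 : 0 ≤ η) (hη1 : η < 1)
    (a c : ℕ → ℝ) (ha : ∀ t, 0 ≤ a t) (hc : ∀ j, 0 ≤ c j)
    (b : ℝ) (hb : 0 ≤ b) :
    ∀ μ : ℝ, η < μ → μ < 1 →
      ((∀ t, a t ≤ b * η ^ t + ∑ j ∈ Finset.range t, η ^ (t - j - 1) * c j) →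
        ∃ κ : ℝ, 0 < κ ∧
          ∀ t, a t ≤ max (κ * b * μ ^ t)
            (maxOver (Finset.range t) fun j => κ * c j * μ ^ (t - j - 1)))
      ∧ ((∀ t, a t ≤ max (b * μ ^ t)
            (maxOver (Finset.range t) fun j => c j * μ ^ (t - j - 1))) →
          ∀ t, a t ≤ b * μ ^ t + ∑ j ∈ Finset.range t, μ ^ (t - j - 1) * c j) :=
  sum_max_discounted_equivalence_general η hη0 a c hc b hb
end
end
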